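/- Let n ≥ 1, A ∈ ℂ^{n×n}, and let O ⊆ ℂ ≅ ℝ² be an open set such that for every λ ∈ O, λ is not an eigenvalue of A and the smallest eigenvalue of (λI − A)ᴴ(λI − A) is simple (attained by exactly one of the n eigenvalues counted with multiplicity). Then the function (x, y) ↦ s_n(x+iy)², assigning to (x,y) the smallest eigenvalue of (P(x+iy))ᴴP(x+iy) where P(λ) = λI − A, is differentiable at every point of O. -/

import Mathlib

open Matrix

/-- The eigenvalues (squares of the singular values) of `λI - A`, i.e. the
eigenvalues of the Hermitian matrix `(λI - A)ᴴ (λI - A)`, counted with multiplicity. -/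
noncomputable def sqSingVals {n : ℕ} (A : Matrix (Fin n) (Fin n) ℂ) (lam : ℂ) :
    Fin n → ℝ :=
  (Matrix.isHermitian_conjTranspose_mul_self
    (lam • (1 : Matrix (Fin n) (Fin n) ℂ) - A)).eigenvalues

/-!
Write `B z = (z I - A)ᴴ (z I - A)` and `s z` for its smallest eigenvalue. Every eigenvalue `μ` of
`B z` is a zero of `F (z, μ) = det (μ I - B z)`, a polynomial in `Re z`, `Im z` and `μ`, and
`∂F/∂μ (z₀, s z₀) = ∏_{j ≠ i₀} (s z₀ - λⱼ(z₀))` is nonzero exactly because the smallest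
eigenvalue is simple. By the implicit function theorem the zeros of `F` near `(z₀, s z₀)` form the
graph of a differentiable function, and `s` agrees with it near `z₀` once `s` is known to be
continuous. Continuity holds because `√(s z) = min_{‖x‖ = 1} ‖(z I - A) x‖` is `1`-Lipschitz in `z`.
-/

open Filter Topology
open scoped ComplexOrder

section Calculus

variable {𝕜 : Type*} [NontriviallyNormedField 𝕜]

theorem ContinuousLinearMap.isInvertible_of_apply_one_ne_zero {L : 𝕜 →L[𝕜] 𝕜} (h : L 1 ≠ 0) :
    L.IsInvertible :=
  ⟨ContinuousLinearEquiv.unitsEquivAut 𝕜 (Units.mk0 _ h), ContinuousLinearMap.ext_ring (by simp)⟩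

theorem hasDerivAt_prod_sub_at_root {ι : Type*} [Fintype ι] [DecidableEq ι] (a : ι → 𝕜) (i : ι) :
    HasDerivAt (fun t => ∏ j, (t - a j)) (∏ j ∈ Finset.univ.erase i, (a i - a j)) (a i) := by
  have hfactor : (fun t => ∏ j, (t - a j)) =
      fun t => (t - a i) * ∏ j ∈ Finset.univ.erase i, (t - a j) := by
    funext t
    exact (Finset.mul_prod_erase _ _ (Finset.mem_univ i)).symm
  have hrest : DifferentiableAt 𝕜 (fun t => ∏ j ∈ Finset.univ.erase i, (t - a j)) (a i) := by
    fun_prop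
  rw [hfactor]
  simpa using ((hasDerivAt_id (a i)).sub_const (a i)).fun_mul hrest.hasDerivAt

theorem ContDiff.matrix_det {E : Type*} [NormedAddCommGroup E] [NormedSpace 𝕜 E]
    {R : Type*} [NormedCommRing R] [NormedAlgebra 𝕜 R] {n : Type*} [Fintype n] [DecidableEq n]
    {k : WithTop ℕ∞} {M : E → Matrix n n R} (hM : ∀ i j, ContDiff 𝕜 k fun x => M x i j) :
    ContDiff 𝕜 k fun x => (M x).det := by
  simp only [det_apply]
  exact ContDiff.sum fun σ _ => (contDiff_prod fun i _ => hM (σ i) i).const_smul _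

variable {E₁ : Type*} [NormedAddCommGroup E₁] [NormedSpace 𝕜 E₁] [CompleteSpace E₁]
  {E₂ : Type*} [NormedAddCommGroup E₂] [NormedSpace 𝕜 E₂] [CompleteSpace E₂]
  {F : Type*} [NormedAddCommGroup F] [NormedSpace 𝕜 F] [CompleteSpace F]

theorem HasStrictFDerivAt.differentiableAt_of_eventually_apply_eq
    {f : E₁ × E₂ → F} {f' : E₁ × E₂ →L[𝕜] F} {g : E₁ → E₂} {x : E₁}
    (hf : HasStrictFDerivAt f f' (x, g x)) (hf₂ : (f' ∘L .inr 𝕜 E₁ E₂).IsInvertible)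
    (hg : ContinuousAt g x) (hfg : ∀ᶠ y in 𝓝 x, f (y, g y) = f (x, g x)) :
    DifferentiableAt 𝕜 g x := by
  have hgraph : Tendsto (fun y => (y, g y)) (𝓝 x) (𝓝 (x, g x)) := tendsto_id.prodMk_nhds hg
  have hψ : g =ᶠ[𝓝 x] hf.implicitFunctionOfProdDomain hf₂ := by
    filter_upwards [hfg,
      hgraph.eventually (hf.eventually_apply_eq_iff_implicitFunctionOfProdDomain hf₂)]
      with y hy hiff
    exact (hiff.mp hy).symm
  exact (hf.hasStrictFDerivAt_implicitFunctionOfProdDomain hf₂).differentiableAt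
    |>.congr_of_eventuallyEq hψ

end Calculus

section Hermitian

variable {𝕜 : Type*} [RCLike 𝕜] {n : Type*} [Fintype n] [DecidableEq n]

theorem Matrix.IsHermitian.posSemidef_sub_smul_one {A : Matrix n n 𝕜} (hA : A.IsHermitian)
    {c : ℝ} (hc : ∀ i, c ≤ hA.eigenvalues i) : (A - (c : 𝕜) • 1).PosSemidef := by
  set U : Matrix n n 𝕜 := (hA.eigenvectorUnitary : Matrix n n 𝕜)
  have hdiag : (diagonal fun i => ((hA.eigenvalues i - c : ℝ) : 𝕜)).PosSemidef :=
    PosSemidef.diagonal fun i => RCLike.ofReal_nonneg.mpr (sub_nonneg.mpr (hc i))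
  convert hdiag.mul_mul_conjTranspose_same U using 1
  have hU : U * Uᴴ = 1 := Unitary.mul_star_self_of_mem hA.eigenvectorUnitary.2
  have hshift : (diagonal fun i => ((hA.eigenvalues i - c : ℝ) : 𝕜)) =
      diagonal (RCLike.ofReal ∘ hA.eigenvalues) - (c : 𝕜) • 1 := by
    rw [smul_one_eq_diagonal, diagonal_sub]
    simp
  conv_lhs => rw [hA.spectral_theorem, Unitary.conjStarAlgAut_apply]
  rw [hshift, Matrix.mul_sub, Matrix.sub_mul, mul_smul_comm, Matrix.mul_one, smul_mul_assoc, hU,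
    star_eq_conjTranspose]

theorem Matrix.IsHermitian.mul_norm_sq_le_re_dotProduct_mulVec {A : Matrix n n 𝕜}
    (hA : A.IsHermitian) {c : ℝ} (hc : ∀ i, c ≤ hA.eigenvalues i) (x : EuclideanSpace 𝕜 n) :
    c * ‖x‖ ^ 2 ≤ RCLike.re (star ⇑x ⬝ᵥ A *ᵥ ⇑x) := by
  have hx : star ⇑x ⬝ᵥ ⇑x = ((‖x‖ ^ 2 : ℝ) : 𝕜) := by
    rw [dotProduct_comm, ← EuclideanSpace.inner_eq_star_dotProduct, inner_self_eq_norm_sq_to_K]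
    push_cast
    rfl
  have h := (hA.posSemidef_sub_smul_one hc).dotProduct_mulVec_nonneg x
  rw [sub_mulVec, dotProduct_sub, smul_mulVec, one_mulVec, dotProduct_smul, hx] at h
  have hre := (RCLike.nonneg_iff.mp h).1
  rw [map_sub, smul_eq_mul, ← RCLike.ofReal_mul, RCLike.ofReal_re] at hre
  linarith

theorem Matrix.re_dotProduct_conjTranspose_mul_self_mulVec {m : Type*} [Fintype m]
    (M : Matrix m n 𝕜) (x : EuclideanSpace 𝕜 n) :
    RCLike.re (star ⇑x ⬝ᵥ (Mᴴ * M) *ᵥ ⇑x) = ‖toEuclideanLin M x‖ ^ 2 := by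
  rw [← mulVec_mulVec, dotProduct_mulVec, ← star_mulVec, ← inner_self_eq_norm_sq (𝕜 := 𝕜),
    EuclideanSpace.inner_eq_star_dotProduct, toLpLin_apply, WithLp.ofLp_toLp, dotProduct_comm]

theorem Matrix.IsHermitian.re_eval_charpoly {A : Matrix n n 𝕜} (hA : A.IsHermitian) (t : ℝ) :
    RCLike.re (A.charpoly.eval (t : 𝕜)) = ∏ i, (t - hA.eigenvalues i) := by
  simp only [hA.charpoly_eq, Polynomial.eval_prod, Polynomial.eval_sub, Polynomial.eval_X,
    Polynomial.eval_C]
  norm_cast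

theorem ContDiff.re_eval_charpoly {E : Type*} [NormedAddCommGroup E] [NormedSpace ℝ E]
    {k : WithTop ℕ∞} {B : E → Matrix n n 𝕜} (hB : ∀ i j, ContDiff ℝ k fun x => B x i j) :
    ContDiff ℝ k fun p : E × ℝ => RCLike.re ((B p.1).charpoly.eval (p.2 : 𝕜)) := by
  simp only [eval_charpoly]
  refine RCLike.reCLM.contDiff.comp
    (ContDiff.matrix_det (M := fun p : E × ℝ => scalar n (p.2 : 𝕜) - B p.1) fun i j => ?_)
  simp only [Matrix.sub_apply, scalar_apply, diagonal_apply]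
  refine ContDiff.sub ?_ ((hB i j).comp contDiff_fst)
  split_ifs
  · exact (RCLike.ofRealCLM (K := 𝕜)).contDiff.comp contDiff_snd
  · exact contDiff_const

theorem Matrix.differentiableAt_of_simple_eigenvalue
    {E : Type*} [NormedAddCommGroup E] [NormedSpace ℝ E] [CompleteSpace E]
    {B : E → Matrix n n 𝕜} (hB : ∀ x, (B x).IsHermitian)
    (hB_smooth : ∀ i j, ContDiff ℝ 1 fun x => B x i j) {μ : E → ℝ} {x₀ : E}
    (hμ : ∀ᶠ x in 𝓝 x₀, ∃ i, (hB x).eigenvalues i = μ x) (hcont : ContinuousAt μ x₀)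
    (hsimple : ∃! i, (hB x₀).eigenvalues i = μ x₀) :
    DifferentiableAt ℝ μ x₀ := by
  obtain ⟨i₀, hi₀, huniq⟩ := hsimple
  set f : E × ℝ → ℝ := fun p => RCLike.re ((B p.1).charpoly.eval (p.2 : 𝕜))
  have hf_eq : ∀ x t, f (x, t) = ∏ i, (t - (hB x).eigenvalues i) := fun x =>
    (hB x).re_eval_charpoly
  have hf_strict : HasStrictFDerivAt f (fderiv ℝ f (x₀, μ x₀)) (x₀, μ x₀) :=
    (ContDiff.re_eval_charpoly hB_smooth).contDiffAt.hasStrictFDerivAt one_ne_zero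
  set c := ∏ j ∈ Finset.univ.erase i₀, ((hB x₀).eigenvalues i₀ - (hB x₀).eigenvalues j)
  have hpartial : HasDerivAt (fun t => f (x₀, t)) c (μ x₀) := by
    simp only [hf_eq, ← hi₀]
    exact hasDerivAt_prod_sub_at_root _ i₀
  have hc : c ≠ 0 :=
    Finset.prod_ne_zero_iff.mpr fun j hj => sub_ne_zero.mpr fun h =>
      (Finset.mem_erase.mp hj).1 (huniq j (h.symm.trans hi₀))
  have hf' : (fderiv ℝ f (x₀, μ x₀) ∘L .inr ℝ E ℝ) 1 = c :=
    (hf_strict.hasFDerivAt.comp_hasDerivAt (μ x₀)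
      ((hasDerivAt_const _ x₀).prodMk (hasDerivAt_id _))).unique hpartial
  refine hf_strict.differentiableAt_of_eventually_apply_eq
    (ContinuousLinearMap.isInvertible_of_apply_one_ne_zero (hf' ▸ hc)) hcont ?_
  have hroot : ∀ x i, f (x, (hB x).eigenvalues i) = 0 := fun x i => by
    rw [hf_eq]
    exact Finset.prod_eq_zero (Finset.mem_univ i) (sub_self _)
  filter_upwards [hμ] with x ⟨i, hi⟩
  rw [← hi, ← hi₀, hroot, hroot]

end Hermitian

section SingularValues

variable {n : ℕ} (A : Matrix (Fin n) (Fin n) ℂ)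

noncomputable def sqSmallestSingVal (z : ℂ) : ℝ := ⨅ r, sqSingVals A z r

theorem contDiff_conjTranspose_mul_self_smul_one_sub_apply (k : WithTop ℕ∞) (i j : Fin n) :
    ContDiff ℝ k fun z : ℂ => ((z • (1 : Matrix (Fin n) (Fin n) ℂ) - A)ᴴ * (z • 1 - A)) i j := by
  have hstar : ContDiff ℝ k (star : ℂ → ℂ) := Complex.conjCLE.contDiff
  simp only [mul_apply, conjTranspose_apply, Matrix.sub_apply, Matrix.smul_apply, smul_eq_mul]
  fun_prop

theorem sqSmallestSingVal_le_norm_sq (z : ℂ) {x : EuclideanSpace ℂ (Fin n)} (hx : ‖x‖ = 1) :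
    sqSmallestSingVal A z ≤ ‖toEuclideanLin (z • 1 - A) x‖ ^ 2 := by
  have h := (isHermitian_conjTranspose_mul_self (z • 1 - A)).mul_norm_sq_le_re_dotProduct_mulVec
    (fun i => ciInf_le (Set.finite_range _).bddBelow i) x
  rwa [hx, one_pow, mul_one, re_dotProduct_conjTranspose_mul_self_mulVec] at h

theorem sqSingVals_eq_norm_sq (z : ℂ) (i : Fin n) :
    sqSingVals A z i = ‖toEuclideanLin (z • 1 - A)
      ((isHermitian_conjTranspose_mul_self (z • (1 : Matrix (Fin n) (Fin n) ℂ) - A)).eigenvectorBasis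
        i)‖ ^ 2 := by
  rw [sqSingVals, IsHermitian.eigenvalues_eq, re_dotProduct_conjTranspose_mul_self_mulVec]

theorem sqrt_sqSmallestSingVal_le [Nonempty (Fin n)] (z w : ℂ) :
    √(sqSmallestSingVal A z) ≤ √(sqSmallestSingVal A w) + dist z w := by
  obtain ⟨i, hi⟩ : ∃ i, sqSingVals A w i = sqSmallestSingVal A w := exists_eq_ciInf_of_finite
  set u :=
    (isHermitian_conjTranspose_mul_self (w • (1 : Matrix (Fin n) (Fin n) ℂ) - A)).eigenvectorBasis i
  have hu : ‖u‖ = 1 := (isHermitian_conjTranspose_mul_self _).eigenvectorBasis.orthonormal.1 i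
  have hsplit : toEuclideanLin (z • 1 - A) u = toEuclideanLin (w • 1 - A) u + (z - w) • u := by
    have : z • (1 : Matrix (Fin n) (Fin n) ℂ) - A = (w • 1 - A) + (z - w) • 1 := by
      rw [sub_smul]
      abel
    rw [this, map_add, LinearMap.add_apply, map_smul, LinearMap.smul_apply, toLpLin_one,
      LinearMap.id_apply]
  calc √(sqSmallestSingVal A z) ≤ ‖toEuclideanLin (z • 1 - A) u‖ :=
        (Real.sqrt_le_sqrt (sqSmallestSingVal_le_norm_sq A z hu)).trans_eq
          (Real.sqrt_sq (norm_nonneg _))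
    _ ≤ ‖toEuclideanLin (w • 1 - A) u‖ + ‖(z - w) • u‖ := hsplit ▸ norm_add_le _ _
    _ = √(sqSmallestSingVal A w) + dist z w := by
      rw [norm_smul, hu, mul_one, ← dist_eq_norm, ← hi, sqSingVals_eq_norm_sq,
        Real.sqrt_sq (norm_nonneg _)]

theorem continuous_sqSmallestSingVal [Nonempty (Fin n)] : Continuous (sqSmallestSingVal A) := by
  have hlip : LipschitzWith 1 fun z => √(sqSmallestSingVal A z) :=
    LipschitzWith.of_le_add (sqrt_sqSmallestSingVal_le A)
  refine (hlip.continuous.pow 2).congr fun z => Real.sq_sqrt (Real.iInf_nonneg fun i => ?_)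
  exact eigenvalues_conjTranspose_mul_self_nonneg _ i

end SingularValues

theorem differentiableAt_smallest_sq_singular_value_general
    {n : ℕ} (A : Matrix (Fin n) (Fin n) ℂ)
    (O : Set ℂ)
    (h : ∀ lam ∈ O, lam ∉ spectrum ℂ A ∧
      (∃! i : Fin n, sqSingVals A lam i = (⨅ r, sqSingVals A lam r))) :
    ∀ lam ∈ O, DifferentiableAt ℝ (fun z : ℂ => ⨅ r, sqSingVals A z r) lam := by
  intro lam hlam
  obtain ⟨-, hsimple⟩ := h lam hlam
  have : Nonempty (Fin n) := ⟨hsimple.exists.choose⟩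
  exact differentiableAt_of_simple_eigenvalue (fun z => isHermitian_conjTranspose_mul_self _)
    (contDiff_conjTranspose_mul_self_smul_one_sub_apply A 1)
    (Eventually.of_forall fun z => exists_eq_ciInf_of_finite)
    (continuous_sqSmallestSingVal A).continuousAt hsimple

/-- If `O ⊆ ℂ` is open and, for every `λ ∈ O`, `λ` is not an eigenvalue of `A` and the
smallest eigenvalue of `(λI - A)ᴴ (λI - A)` is simple (attained at exactly one index),
then `λ ↦ s_n(λ)²`, the smallest eigenvalue of `(λI - A)ᴴ (λI - A)`, is (real-)
differentiable at every point of `O`. -/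
theorem differentiableAt_smallest_sq_singular_value
    {n : ℕ} (hn : 1 ≤ n) (A : Matrix (Fin n) (Fin n) ℂ)
    (O : Set ℂ) (hO : IsOpen O)
    (h : ∀ lam ∈ O, lam ∉ spectrum ℂ A ∧
      (∃! i : Fin n, sqSingVals A lam i = (⨅ r, sqSingVals A lam r))) :
    ∀ lam ∈ O, DifferentiableAt ℝ (fun z : ℂ => ⨅ r, sqSingVals A z r) lam :=
  differentiableAt_smallest_sq_singular_value_general A O h
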